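/- arXiv:2109.07286 — 7 statements merged into one kernel-verified Lean document; each statement's English description precedes it below -/
import Mathlib

section
/- An equivalence relation θ on a topological space X is open as a subset of X × X if and only if it is clopen as a subset of X × X. -/
/-- An equivalence relation `θ` on a topological space `X` is open as a subset
of `X × X` if and only if it is clopen as a subset of `X × X`. -/
theorem stmt2 {X : Type*} [TopologicalSpace X]
    (θ : X → X → Prop) (hθ : Equivalence θ) :
    IsOpen {p : X × X | θ p.1 p.2} ↔ IsClopen {p : X × X | θ p.1 p.2} := by
  constructor
  · intro h
    refine ⟨?_, h⟩
    rw [← isOpen_compl_iff]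
    rw [isOpen_iff_mem_nhds]
    rintro ⟨a, b⟩ (hab : ¬ θ a b)
    have hca : IsOpen {y | θ a y} := by
      have : Continuous fun y : X => ((a, y) : X × X) := by continuity
      exact h.preimage this
    have hcb : IsOpen {y | θ b y} := by
      have : Continuous fun y : X => ((b, y) : X × X) := by continuity
      exact h.preimage this
    have hmem : (a, b) ∈ {y | θ a y} ×ˢ {y | θ b y} := ⟨hθ.refl a, hθ.refl b⟩
    refine Filter.mem_of_superset ((hca.prod hcb).mem_nhds hmem) ?_
    rintro ⟨x, y⟩ ⟨hx, hy⟩ (hxy : θ x y)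
    exact hab (hθ.trans hx (hθ.trans hxy (hθ.symm hy)))
  · exact fun h => h.2
end

section
/- Let φ : A → B be a surjective homomorphism of Ω-algebras and L ⊆ B. Then (φ × φ)⁻¹(σ_L^B) = σ_{φ⁻¹(L)}^A, and consequently φ induces an isomorphism A/σ_{φ⁻¹(L)}^A ≅ B/σ_L^B. -/
universe u v w

/-- The translation monoid `M(A)`: self-maps of `A` given by terms linear in a
distinguished variable, with all other variables evaluated in `A`. -/
inductive IsTranslation {Ω : ℕ → Type u} {A : Type v}
    (ops : ∀ n, Ω n → (Fin n → A) → A) : (A → A) → Prop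
  | id_map : IsTranslation ops id
  | comp {n : ℕ} (w : Ω n) (i : Fin n) (v : Fin n → A) {f : A → A}
      (hf : IsTranslation ops f) :
      IsTranslation ops (fun a => ops n w (Function.update v i (f a)))

/-- A congruence on an `Ω`-algebra. -/
def IsCongruence {Ω : ℕ → Type u} {A : Type v}
    (ops : ∀ n, Ω n → (Fin n → A) → A) (θ : A → A → Prop) : Prop :=
  Equivalence θ ∧
    ∀ ⦃n : ℕ⦄ (w : Ω n) (u v : Fin n → A),
      (∀ i, θ (u i) (v i)) → θ (ops n w u) (ops n w v)

/-- An equivalence relation saturates `L` when `L` is a union of its classes. -/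
def Saturates {A : Type v} (θ : A → A → Prop) (L : Set A) : Prop :=
  ∀ a a', θ a a' → (a ∈ L ↔ a' ∈ L)

/-- The syntactic congruence of `L ⊆ A`. -/
def synCong {Ω : ℕ → Type u} {A : Type v}
    (ops : ∀ n, Ω n → (Fin n → A) → A) (L : Set A) : A → A → Prop :=
  fun a a' => ∀ f : A → A, IsTranslation ops f → (f a ∈ L ↔ f a' ∈ L)

theorem synCong_equivalence {Ω : ℕ → Type u} {A : Type v}
    (ops : ∀ n, Ω n → (Fin n → A) → A) (L : Set A) :
    Equivalence (synCong ops L) :=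
  ⟨fun _ _ _ => Iff.rfl, fun h f hf => (h f hf).symm,
    fun h1 h2 f hf => (h1 f hf).trans (h2 f hf)⟩

/-- The setoid determined by the syntactic congruence of `L`. -/
def synSetoid {Ω : ℕ → Type u} {A : Type v}
    (ops : ∀ n, Ω n → (Fin n → A) → A) (L : Set A) : Setoid A :=
  ⟨synCong ops L, synCong_equivalence ops L⟩

/-- The quotient algebra structure on `A/s`. -/
noncomputable def qops {Ω : ℕ → Type u} {A : Type v}
    (ops : ∀ n, Ω n → (Fin n → A) → A) (s : Setoid A) :
    ∀ n, Ω n → (Fin n → Quotient s) → Quotient s :=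
  fun n w v => Quotient.mk s (ops n w (fun i => (v i).out))

section Aux
variable {Ω : ℕ → Type u} {A : Type v} {B : Type w}

lemma trans_comp_elem {ops : ∀ n, Ω n → (Fin n → A) → A} {f : A → A}
    (hf : IsTranslation ops f) {n : ℕ} (w : Ω n) (i : Fin n) (v : Fin n → A) :
    IsTranslation ops (fun a => f (ops n w (Function.update v i a))) := by
  induction hf with
  | id_map => exact IsTranslation.comp w i v IsTranslation.id_map
  | comp w' i' v' hf' ih => exact IsTranslation.comp w' i' v' ih

lemma elem_cong {ops : ∀ n, Ω n → (Fin n → A) → A} {L : Set A} {a a' : A}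
    (h : synCong ops L a a') {n : ℕ} (w : Ω n) (i : Fin n) (v : Fin n → A) :
    synCong ops L (ops n w (Function.update v i a)) (ops n w (Function.update v i a')) :=
  fun f hf => h _ (trans_comp_elem hf w i v)

lemma synCong_ops {ops : ∀ n, Ω n → (Fin n → A) → A} (L : Set A) {n : ℕ}
    (w : Ω n) (u v : Fin n → A) (h : ∀ i, synCong ops L (u i) (v i)) :
    synCong ops L (ops n w u) (ops n w v) := by
  have key : ∀ k : ℕ, k ≤ n → synCong ops L (ops n w u)
      (ops n w (fun i => if i.val < k then v i else u i)) := by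
    intro k
    induction k with
    | zero =>
      intro _
      have hu : (fun i : Fin n => if i.val < 0 then v i else u i) = u := by
        funext i; simp
      rw [hu]; exact (synCong_equivalence ops L).refl _
    | succ k ih =>
      intro hk
      have hkn : k < n := hk
      set g : Fin n → A := fun i => if i.val < k then v i else u i with hg
      have hgk : g ⟨k, hkn⟩ = u ⟨k, hkn⟩ := by simp [hg]
      have h1 : g = Function.update g ⟨k, hkn⟩ (u ⟨k, hkn⟩) := by
        rw [← hgk, Function.update_eq_self]
      have h2 : (fun i : Fin n => if i.val < k + 1 then v i else u i)
          = Function.update g ⟨k, hkn⟩ (v ⟨k, hkn⟩) := by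
        funext j
        by_cases hj : j = ⟨k, hkn⟩
        · subst hj; simp
        · have hj' : (j : ℕ) ≠ k := fun hc => hj (Fin.ext hc)
          rw [Function.update_of_ne hj]
          simp only [hg]
          have : (j : ℕ) < k + 1 ↔ (j : ℕ) < k := by omega
          simp [this]
      refine (synCong_equivalence ops L).trans (ih (Nat.le_of_succ_le hk)) ?_
      rw [h2]
      conv_lhs => rw [h1]
      exact elem_cong (h _) w _ g
  have hv : (fun i : Fin n => if i.val < n then v i else u i) = v := by
    funext i; simp [i.isLt]
  have := key n le_rfl
  rwa [hv] at this

lemma pushforward_trans {opsA : ∀ n, Ω n → (Fin n → A) → A}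
    {opsB : ∀ n, Ω n → (Fin n → B) → B} {φ : A → B}
    (hhom : ∀ (n : ℕ) (w : Ω n) (v : Fin n → A),
      φ (opsA n w v) = opsB n w (fun i => φ (v i)))
    {f : A → A} (hf : IsTranslation opsA f) :
    ∃ g : B → B, IsTranslation opsB g ∧ ∀ a, φ (f a) = g (φ a) := by
  induction hf with
  | id_map => exact ⟨id, IsTranslation.id_map, fun a => rfl⟩
  | @comp n w i v f' hf' ih =>
    obtain ⟨g', hg', hcomm⟩ := ih
    refine ⟨fun b => opsB n w (Function.update (fun j => φ (v j)) i (g' b)),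
      IsTranslation.comp w i _ hg', fun a => ?_⟩
    rw [hhom]
    congr 1
    funext j
    by_cases hj : j = i
    · subst hj; simp [hcomm]
    · simp [Function.update_of_ne hj]

lemma pullback_trans {opsA : ∀ n, Ω n → (Fin n → A) → A}
    {opsB : ∀ n, Ω n → (Fin n → B) → B} {φ : A → B}
    (hφ : Function.Surjective φ)
    (hhom : ∀ (n : ℕ) (w : Ω n) (v : Fin n → A),
      φ (opsA n w v) = opsB n w (fun i => φ (v i)))
    {g : B → B} (hg : IsTranslation opsB g) :
    ∃ f : A → A, IsTranslation opsA f ∧ ∀ a, φ (f a) = g (φ a) := by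
  induction hg with
  | id_map => exact ⟨id, IsTranslation.id_map, fun a => rfl⟩
  | @comp n w i v g' hg' ih =>
    obtain ⟨f', hf', hcomm⟩ := ih
    choose v' hv' using fun j => hφ (v j)
    refine ⟨fun a => opsA n w (Function.update v' i (f' a)),
      IsTranslation.comp w i v' hf', fun a => ?_⟩
    rw [hhom]
    congr 1
    funext j
    by_cases hj : j = i
    · subst hj; simp [hcomm]
    · simp [Function.update_of_ne hj, hv']

end Aux

/-- For a surjective homomorphism `φ : A → B` and `L ⊆ B`,
`(φ × φ)⁻¹(σ_L^B) = σ_{φ⁻¹(L)}^A`, and `φ` induces an isomorphism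
`A/σ_{φ⁻¹(L)}^A ≅ B/σ_L^B`. -/
theorem stmt6 {Ω : ℕ → Type u} {A : Type v} {B : Type w}
    (opsA : ∀ n, Ω n → (Fin n → A) → A) (opsB : ∀ n, Ω n → (Fin n → B) → B)
    (φ : A → B) (hφ : Function.Surjective φ)
    (hhom : ∀ (n : ℕ) (w : Ω n) (v : Fin n → A),
      φ (opsA n w v) = opsB n w (fun i => φ (v i)))
    (L : Set B) :
    (∀ a a' : A, synCong opsA (φ ⁻¹' L) a a' ↔ synCong opsB L (φ a) (φ a')) ∧
    ∃ e : Quotient (synSetoid opsA (φ ⁻¹' L)) ≃ Quotient (synSetoid opsB L),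
      (∀ a : A, e (Quotient.mk (synSetoid opsA (φ ⁻¹' L)) a) =
        Quotient.mk (synSetoid opsB L) (φ a)) ∧
      ∀ (n : ℕ) (w : Ω n) (v : Fin n → Quotient (synSetoid opsA (φ ⁻¹' L))),
        e (qops opsA (synSetoid opsA (φ ⁻¹' L)) n w v) =
          qops opsB (synSetoid opsB L) n w (fun i => e (v i)) := by

  have part1 : ∀ a a' : A, synCong opsA (φ ⁻¹' L) a a' ↔ synCong opsB L (φ a) (φ a') := by
    intro a a'
    constructor
    · intro h g hg
      obtain ⟨f, hf, hcomm⟩ := pullback_trans hφ hhom hg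
      rw [← hcomm, ← hcomm]
      exact h f hf
    · intro h f hf
      obtain ⟨g, hg, hcomm⟩ := pushforward_trans hhom hf
      simp only [Set.mem_preimage, hcomm]
      exact h g hg
  refine ⟨part1, ?_⟩
  have wd : ∀ a a' : A, synCong opsA (φ ⁻¹' L) a a' →
      Quotient.mk (synSetoid opsB L) (φ a) = Quotient.mk (synSetoid opsB L) (φ a') :=
    fun a a' h => Quotient.sound ((part1 a a').mp h)
  set F : Quotient (synSetoid opsA (φ ⁻¹' L)) → Quotient (synSetoid opsB L) :=
    Quotient.lift (fun a => Quotient.mk (synSetoid opsB L) (φ a)) wd with hF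
  have hFmk : ∀ a : A, F (Quotient.mk (synSetoid opsA (φ ⁻¹' L)) a) =
      Quotient.mk (synSetoid opsB L) (φ a) := fun a => rfl
  have hinj : Function.Injective F := by
    intro x y
    refine Quotient.inductionOn₂ x y ?_
    intro a a' h
    exact Quotient.sound ((part1 a a').mpr (Quotient.exact h))
  have hsurj : Function.Surjective F := by
    intro y
    refine Quotient.inductionOn y ?_
    intro b
    obtain ⟨a, ha⟩ := hφ b
    exact ⟨Quotient.mk _ a, by rw [hFmk, ha]⟩
  refine ⟨Equiv.ofBijective F ⟨hinj, hsurj⟩, hFmk, ?_⟩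
  intro n w v
  show F (qops opsA (synSetoid opsA (φ ⁻¹' L)) n w v) =
    qops opsB (synSetoid opsB L) n w (fun i => F (v i))
  have hout : ∀ i, F (v i) = Quotient.mk (synSetoid opsB L) (φ ((v i).out)) := by
    intro i
    conv_lhs => rw [← Quotient.out_eq (v i)]
    exact hFmk _
  simp only [qops, hFmk, hhom]
  refine Quotient.sound ?_
  refine synCong_ops L w _ _ ?_
  intro i
  have h2 : synCong opsB L ((F (v i)).out) (φ ((v i).out)) := by
    rw [hout i]
    exact Quotient.mk_out (s := synSetoid opsB L) (φ ((v i).out))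
  exact (synCong_equivalence opsB L).symm h2
end

section
/- Let A be a profinite algebra and θ a closed congruence on A such that the quotient A/θ is 0-dimensional. Then A/θ is a profinite algebra. -/
universe u v w

/-- Residual finiteness: distinct points are separated by continuous
homomorphisms onto finite discrete algebras. -/
def ResiduallyFinite {Ω : ℕ → Type u} {A : Type v} [TopologicalSpace A]
    (ops : ∀ n, Ω n → (Fin n → A) → A) : Prop :=
  ∀ a a' : A, a ≠ a' →
    ∃ (B : Type v) (_ : Fintype B) (opsB : ∀ n, Ω n → (Fin n → B) → B) (φ : A → B),
      @Continuous A B _ ⊥ φ ∧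
      (∀ (n : ℕ) (w : Ω n) (v : Fin n → A), φ (ops n w v) = opsB n w (fun i => φ (v i))) ∧
      φ a ≠ φ a'

/-!
The quotient `A/θ` is compact, and it is T₁ because `θ` is closed; having a clopen basis it is
then totally separated, hence Hausdorff. The quotient operations are continuous because
`Aⁿ → (A/θ)ⁿ` is a continuous surjection from a compact space onto a Hausdorff one, hence a
quotient map.

Residual finiteness comes from the syntactic congruence `≈_L` of a set `L`, the largest
congruence saturating `L`. For clopen `V ⊆ A`, compactness of `V × Vᶜ` gives finitely many
continuous homomorphisms onto finite algebras whose joint kernel saturates `V`, so `≈_V` has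
finite index. Translations of `A/θ` lift to translations of `A`, so `≈_U` has finite index for
every clopen `U ⊆ A/θ`; as translations are continuous its classes are closed, and
`A/θ → (A/θ)/≈_U` is a continuous homomorphism onto a finite discrete algebra separating `U`
from its complement.
-/

open Function Topology TopologicalSpace

variable {Ω : ℕ → Type u} {A : Type v} {ops : ∀ n, Ω n → (Fin n → A) → A}

theorem IsTranslation.comp' {f g : A → A} (hf : IsTranslation ops f) (hg : IsTranslation ops g) :
    IsTranslation ops (f ∘ g) := by
  induction hf with
  | id_map => exact hg
  | comp w i v _ ih => exact .comp w i v ih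

theorem IsTranslation.continuous [TopologicalSpace A] (hc : ∀ n w, Continuous (ops n w))
    {f : A → A} (hf : IsTranslation ops f) : Continuous f := by
  induction hf with
  | id_map => exact continuous_id
  | comp w i v _ ih => exact (hc _ w).comp (continuous_const.update i ih)

theorem IsCongruence.apply_of_isTranslation {ρ : A → A → Prop} (hρ : IsCongruence ops ρ)
    {f : A → A} (hf : IsTranslation ops f) {a b : A} (h : ρ a b) : ρ (f a) (f b) := by
  induction hf with
  | id_map => exact h
  | comp w i v _ ih =>
    refine hρ.2 w _ _ fun j => ?_
    rcases eq_or_ne j i with rfl | hj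
    · simpa using ih
    · simpa [hj] using hρ.1.refl _

theorem isCongruence_of_update {θ : A → A → Prop} (hθ : Equivalence θ)
    (h : ∀ ⦃n⦄ (w : Ω n) (i : Fin n) (v : Fin n → A) ⦃a b : A⦄, θ a b →
      θ (ops n w (update v i a)) (ops n w (update v i b))) :
    IsCongruence ops θ := by
  classical
  refine ⟨hθ, fun n w u v huv => ?_⟩
  suffices ∀ S : Finset (Fin n), θ (ops n w u) (ops n w (S.piecewise v u)) by
    simpa using this Finset.univ
  intro S
  induction S using Finset.induction_on with
  | empty => simpa using hθ.refl _
  | insert i S hi ih =>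
    refine hθ.trans ih ?_
    rw [Finset.piecewise_insert]
    conv_lhs => rw [← update_eq_self i (S.piecewise v u), Finset.piecewise_eq_of_notMem _ _ _ hi]
    exact h w i _ (huv i)

theorem isCongruence_ker {B : Type*} {opsB : ∀ n, Ω n → (Fin n → B) → B} {φ : A → B}
    (hφ : ∀ n w v, φ (ops n w v) = opsB n w fun i => φ (v i)) :
    IsCongruence ops fun a b => φ a = φ b :=
  ⟨(Setoid.ker φ).iseqv, fun n w u v huv => by simp only [hφ, huv]⟩

theorem synCong_isCongruence (ops : ∀ n, Ω n → (Fin n → A) → A) (L : Set A) :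
    IsCongruence ops (synCong ops L) :=
  isCongruence_of_update (synCong_equivalence ops L) fun _ w i v _ _ h _ hf =>
    h _ (hf.comp' (.comp w i v .id_map))

theorem synCong_of_saturates {ρ : A → A → Prop} (hρ : IsCongruence ops ρ) {L : Set A}
    (hL : Saturates ρ L) {a b : A} (h : ρ a b) : synCong ops L a b :=
  fun _ hf => hL _ _ (hρ.apply_of_isTranslation hf h)

def synCongSetoid (ops : ∀ n, Ω n → (Fin n → A) → A) (L : Set A) : Setoid A :=
  ⟨synCong ops L, synCong_equivalence ops L⟩

theorem qops_mk {s : Setoid A} (hcong : IsCongruence ops fun a b => s.r a b)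
    (n : ℕ) (w : Ω n) (u : Fin n → A) :
    qops ops s n w (fun i => Quotient.mk s (u i)) = Quotient.mk s (ops n w u) :=
  Quotient.sound (hcong.2 w _ _ fun i => Quotient.mk_out (u i))

theorem Setoid.finite_quotient_of_map {X Y : Type*} {r : Setoid X} {r' : Setoid Y}
    [Finite (Quotient r)] {f : X → Y} (hf : Surjective f)
    (h : ∀ ⦃a b⦄, r a b → r' (f a) (f b)) :
    Finite (Quotient r') :=
  .of_surjective _ (Quotient.map_surjective h hf)

theorem continuous_of_isClosed_preimage_singleton {X Y : Type*} [TopologicalSpace X]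
    [TopologicalSpace Y] [DiscreteTopology Y] [Finite Y] {f : X → Y}
    (hf : ∀ y, IsClosed (f ⁻¹' {y})) : Continuous f :=
  continuous_iff_isClosed.2 fun S _ => by
    rw [← Set.biUnion_preimage_singleton]
    exact S.toFinite.isClosed_biUnion fun y _ => hf y

theorem isOpen_setOf_apply_ne {X B : Type*} [TopologicalSpace X] {φ : X → B}
    (hφ : Continuous[_, ⊥] φ) : IsOpen {p : X × X | φ p.1 ≠ φ p.2} :=
  let _ : TopologicalSpace B := ⊥
  have : DiscreteTopology B := ⟨rfl⟩
  isOpen_ne_fun (hφ.comp continuous_fst) (hφ.comp continuous_snd)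

theorem isClosed_setOf_synCong [TopologicalSpace A] (hc : ∀ n w, Continuous (ops n w))
    {L : Set A} (hL : IsClopen L) (b : A) : IsClosed {a | synCong ops L a b} := by
  simp only [synCong, Set.ofPred_forall]
  refine isClosed_iInter fun f => isClosed_iInter fun hf => ?_
  by_cases hb : f b ∈ L
  · simp only [hb, iff_true]
    exact hL.isClosed.preimage (hf.continuous hc)
  · simp only [hb, iff_false]
    exact hL.compl.isClosed.preimage (hf.continuous hc)

theorem residuallyFinite_of_finite_synCong [TopologicalSpace A] [TotallySeparatedSpace A]
    (hc : ∀ n w, Continuous (ops n w))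
    (hfin : ∀ L : Set A, IsClopen L → Finite (Quotient (synCongSetoid ops L))) :
    ResiduallyFinite ops := by
  intro a b hab
  obtain ⟨L, hL, haL, hbL⟩ := exists_isClopen_of_totally_separated hab
  have := hfin L hL
  let _ : TopologicalSpace (Quotient (synCongSetoid ops L)) := ⊥
  have : DiscreteTopology (Quotient (synCongSetoid ops L)) := ⟨rfl⟩
  refine ⟨_, .ofFinite _, qops ops (synCongSetoid ops L), Quotient.mk _, ?_, ?_, ?_⟩
  · refine continuous_of_isClosed_preimage_singleton fun y => y.inductionOn fun c => ?_
    simp only [Set.preimage, Set.mem_singleton_iff, Quotient.eq]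
    exact isClosed_setOf_synCong hc hL c
  · exact fun n w v => (qops_mk (synCong_isCongruence ops L) n w v).symm
  · exact fun h => hbL ((Quotient.exact h id .id_map).1 haL)

/-- By compactness of `V ×ˢ Vᶜ`, finitely many of the homomorphisms given by residual finiteness
already separate `V` from `Vᶜ`; their joint kernel is the congruence. -/
theorem exists_isCongruence_finite_saturates [TopologicalSpace A] [CompactSpace A]
    (hRF : ResiduallyFinite ops) {V : Set A} (hV : IsClopen V) :
    ∃ ρ : Setoid A, IsCongruence ops ρ ∧ Finite (Quotient ρ) ∧ Saturates ρ V := by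
  choose B _ opsB φ hφc hφ hφne using fun p : {p : A × A // p.1 ≠ p.2} => hRF _ _ p.2
  obtain ⟨t, ht⟩ := (hV.isClosed.prod hV.compl.isClosed).isCompact.elim_finite_subcover
    (fun p => {q : A × A | φ p q.1 ≠ φ p q.2}) (fun p => isOpen_setOf_apply_ne (hφc p))
    fun q hq => Set.mem_iUnion.2 ⟨⟨q, fun h => hq.2 (h ▸ hq.1)⟩, hφne _⟩
  let Φ : A → ∀ p : t, B p := fun a p => φ p a
  have hΦ : ∀ a b, Φ a = Φ b → a ∈ V → b ∈ V := fun a b hab ha => by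
    by_contra hb
    obtain ⟨p, hp, hne⟩ := Set.mem_iUnion₂.1 (ht (Set.mk_mem_prod ha hb))
    exact hne (congrFun hab ⟨p, hp⟩)
  refine ⟨Setoid.ker Φ, ?_, .of_injective _ (Setoid.kerLift_injective Φ),
    fun a b hab => ⟨hΦ a b hab, hΦ b a hab.symm⟩⟩
  exact isCongruence_ker
    (opsB := fun n w (v : Fin n → ∀ p : t, B p) p => opsB p n w fun i => v i p)
    fun n w v => funext fun p => hφ p n w v

theorem finite_quotient_synCongSetoid [TopologicalSpace A] [CompactSpace A]
    (hRF : ResiduallyFinite ops) {V : Set A} (hV : IsClopen V) :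
    Finite (Quotient (synCongSetoid ops V)) := by
  obtain ⟨ρ, hρ, _, hsat⟩ := exists_isCongruence_finite_saturates hRF hV
  exact Setoid.finite_quotient_of_map surjective_id fun _ _ => synCong_of_saturates hρ hsat

section QuotientAlgebra

variable {s : Setoid A}

theorem exists_lift_of_isTranslation_qops (hcong : IsCongruence ops fun a b => s.r a b)
    {f : Quotient s → Quotient s} (hf : IsTranslation (qops ops s) f) :
    ∃ g : A → A, IsTranslation ops g ∧ ∀ a, f (Quotient.mk s a) = Quotient.mk s (g a) := by
  induction hf with
  | id_map => exact ⟨id, .id_map, fun _ => rfl⟩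
  | comp w i v _ ih =>
    obtain ⟨g, hg, hfg⟩ := ih
    refine ⟨_, .comp w i (fun j => (v j).out) hg, fun a => ?_⟩
    dsimp only
    rw [hfg, ← qops_mk hcong]
    congr 1
    ext j
    rcases eq_or_ne j i with rfl | hj <;> simp [*]

theorem synCong_qops_mk (hcong : IsCongruence ops fun a b => s.r a b) {U : Set (Quotient s)}
    {a b : A} (h : synCong ops (Quotient.mk s ⁻¹' U) a b) :
    synCong (qops ops s) U (Quotient.mk s a) (Quotient.mk s b) := by
  intro f hf
  obtain ⟨g, hg, hfg⟩ := exists_lift_of_isTranslation_qops hcong hf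
  rw [hfg, hfg]
  exact h g hg

theorem finite_quotient_synCongSetoid_qops [TopologicalSpace A] [CompactSpace A]
    (hRF : ResiduallyFinite ops) (hcong : IsCongruence ops fun a b => s.r a b)
    {U : Set (Quotient s)} (hU : IsClopen U) :
    Finite (Quotient (synCongSetoid (qops ops s) U)) :=
  have : Finite (Quotient (synCongSetoid ops (Quotient.mk s ⁻¹' U))) :=
    finite_quotient_synCongSetoid hRF (hU.preimage continuous_quot_mk)
  Setoid.finite_quotient_of_map (r := synCongSetoid ops (Quotient.mk s ⁻¹' U))
    Quotient.mk_surjective fun _ _ => synCong_qops_mk hcong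

theorem continuous_qops [TopologicalSpace A] [CompactSpace A] [T2Space (Quotient s)]
    (hc : ∀ n w, Continuous (ops n w)) (hcong : IsCongruence ops fun a b => s.r a b)
    (n : ℕ) (w : Ω n) : Continuous (qops ops s n w) := by
  have hq : IsQuotientMap fun (u : Fin n → A) i => Quotient.mk s (u i) :=
    .of_surjective_continuous (fun v => ⟨fun i => (v i).out, funext fun i => (v i).out_eq⟩)
      (continuous_pi fun i => continuous_quot_mk.comp (continuous_apply i))
  have hcomp : qops ops s n w ∘ (fun u i => Quotient.mk s (u i)) = Quotient.mk s ∘ ops n w :=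
    funext (qops_mk hcong n w)
  rw [hq.continuous_iff, hcomp]
  exact continuous_quot_mk.comp (hc n w)

theorem t1Space_quotient_of_isClosed [TopologicalSpace A]
    (hs : IsClosed {p : A × A | s.r p.1 p.2}) : T1Space (Quotient s) := by
  refine ⟨fun x => x.inductionOn fun a => ?_⟩
  have hfiber :
      Quotient.mk s ⁻¹' {Quotient.mk s a} = (·, a) ⁻¹' {p : A × A | s.r p.1 p.2} :=
    Set.ext fun _ => Quotient.eq
  rw [← isQuotientMap_quotient_mk'.isClosed_preimage]
  exact hfiber ▸ hs.preimage (by fun_prop)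

end QuotientAlgebra

theorem stmt8_general {Ω : ℕ → Type u} {A : Type v} [TopologicalSpace A]
    [CompactSpace A]
    (ops : ∀ n, Ω n → (Fin n → A) → A)
    (hc : ∀ (n : ℕ) (w : Ω n), Continuous (ops n w))
    (hRF : ResiduallyFinite ops)
    (s : Setoid A)
    (hcong : IsCongruence ops (fun a b => s.r a b))
    (hclosed : IsClosed {p : A × A | s.r p.1 p.2})
    (hzero : TopologicalSpace.IsTopologicalBasis
      {U : Set (Quotient s) | IsClopen U}) :
    CompactSpace (Quotient s) ∧ T2Space (Quotient s) ∧
      (∀ (n : ℕ) (w : Ω n), Continuous (qops ops s n w)) ∧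
      ResiduallyFinite (qops ops s) := by
  have : T1Space (Quotient s) := t1Space_quotient_of_isClosed hclosed
  have : TotallySeparatedSpace (Quotient s) := totallySeparatedSpace_of_t0_of_basis_clopen hzero
  have hqc := continuous_qops hc hcong
  exact ⟨inferInstance, inferInstance, hqc, residuallyFinite_of_finite_synCong hqc
    fun _ => finite_quotient_synCongSetoid_qops hRF hcong⟩

/-- Let `A` be a profinite algebra and `θ` a closed congruence on `A` such that
`A/θ` is 0-dimensional. Then `A/θ` is a profinite (topological) algebra. -/
theorem stmt8 {Ω : ℕ → Type u} {A : Type v} [TopologicalSpace A]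
    [CompactSpace A] [T2Space A]
    (ops : ∀ n, Ω n → (Fin n → A) → A)
    (hc : ∀ (n : ℕ) (w : Ω n), Continuous (ops n w))
    (hRF : ResiduallyFinite ops)
    (s : Setoid A)
    (hcong : IsCongruence ops (fun a b => s.r a b))
    (hclosed : IsClosed {p : A × A | s.r p.1 p.2})
    (hzero : TopologicalSpace.IsTopologicalBasis
      {U : Set (Quotient s) | IsClopen U}) :
    CompactSpace (Quotient s) ∧ T2Space (Quotient s) ∧
      (∀ (n : ℕ) (w : Ω n), Continuous (qops ops s n w)) ∧
      ResiduallyFinite (qops ops s) :=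
  stmt8_general ops hc hRF s hcong hclosed hzero
end

section
/- Let A be an algebra and L ⊆ A such that the syntactic congruence σ_L has finite index (finitely many classes). Then there exists a finite subset F of the translation monoid M(A) such that σ_L = ⋂_{f ∈ F} { (a,a') : f(a) ∈ L ↔ f(a') ∈ L }. -/
universe u v w

/-- If the syntactic congruence `σ_L` has finite index, then it is
`F`-determined for some finite `F ⊆ M(A)`. -/
theorem stmt11 {Ω : ℕ → Type u} {A : Type v}
    (ops : ∀ n, Ω n → (Fin n → A) → A) (L : Set A)
    (hfin : Finite (Quotient (⟨synCong ops L, synCong_equivalence ops L⟩ : Setoid A))) :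
    ∃ F : Set (A → A), F.Finite ∧ (∀ f ∈ F, IsTranslation ops f) ∧
      ∀ a a' : A, synCong ops L a a' ↔ ∀ f ∈ F, (f a ∈ L ↔ f a' ∈ L) := by
  classical
  set S : Setoid A := ⟨synCong ops L, synCong_equivalence ops L⟩ with hS
  have hsym : ∀ {x y : A}, synCong ops L x y → synCong ops L y x :=
    fun h => (synCong_equivalence ops L).symm h
  have htrans : ∀ {x y z : A}, synCong ops L x y → synCong ops L y z → synCong ops L x z :=
    fun h1 h2 => (synCong_equivalence ops L).trans h1 h2
  have key : ∀ p : Quotient S × Quotient S,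
      ∃ f : A → A, IsTranslation ops f ∧
        (¬ synCong ops L p.1.out p.2.out → ¬ (f p.1.out ∈ L ↔ f p.2.out ∈ L)) := by
    intro p
    by_cases h : synCong ops L p.1.out p.2.out
    · exact ⟨id, IsTranslation.id_map, fun hc => absurd h hc⟩
    · rw [synCong] at h
      push_neg at h
      obtain ⟨f, hf, hne⟩ := h
      exact ⟨f, hf, fun _ => by tauto⟩
  choose g hg1 hg2 using key
  refine ⟨Set.range g, Set.finite_range g, ?_, ?_⟩
  · rintro f ⟨p, rfl⟩; exact hg1 p
  · intro a a'
    constructor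
    · rintro h f ⟨p, rfl⟩
      exact h _ (hg1 p)
    · intro h
      set q := Quotient.mk S a with hq
      set q' := Quotient.mk S a' with hq'
      have ha : synCong ops L q.out a := Quotient.exact q.out_eq
      have ha' : synCong ops L q'.out a' := Quotient.exact q'.out_eq
      by_contra hne
      have hout : ¬ synCong ops L q.out q'.out := fun hc =>
        hne (htrans (hsym ha) (htrans hc ha'))
      have hd := hg2 (q, q') hout
      apply hd
      have h1 := ha (g (q, q')) (hg1 (q, q'))
      have h2 := ha' (g (q, q')) (hg1 (q, q'))
      have h3 := h (g (q, q')) ⟨(q, q'), rfl⟩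
      tauto
end

section
/- Let X be a locally compact Hausdorff space, Y a topological space, and K a compact subset of C(X,Y). Then for every open subset U of Y, the set ⋂_{f ∈ K} f⁻¹(U) is open in X. -/
/-- Let `X` be a locally compact Hausdorff space, `Y` a topological space, and
`K` a compact subset of `C(X,Y)`. Then for every open `U ⊆ Y`, the set
`⋂_{f ∈ K} f⁻¹(U)` is open in `X`. -/
theorem stmt14 {X Y : Type*} [TopologicalSpace X] [T2Space X]
    [LocallyCompactSpace X] [TopologicalSpace Y]
    (K : Set C(X, Y)) (hK : IsCompact K) (U : Set Y) (hU : IsOpen U) :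
    IsOpen (⋂ f ∈ K, ⇑f ⁻¹' U) := by
  rw [isOpen_iff_mem_nhds]
  intro x hx
  simp only [Set.mem_iInter, Set.mem_preimage] at hx
  have hcont : Continuous fun p : C(X, Y) × X => p.1 p.2 := continuous_eval
  have hsub : K ×ˢ ({x} : Set X) ⊆ (fun p : C(X, Y) × X => p.1 p.2) ⁻¹' U := by
    rintro ⟨f, y⟩ ⟨hf, hy⟩
    simp only [Set.mem_singleton_iff] at hy
    subst hy
    exact hx f hf
  obtain ⟨V, W, hVo, hWo, hKV, hxW, hVW⟩ :=
    generalized_tube_lemma hK isCompact_singleton (hU.preimage hcont) hsub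
  refine Filter.mem_of_superset (hWo.mem_nhds (hxW rfl)) ?_
  intro y hy
  simp only [Set.mem_iInter, Set.mem_preimage]
  intro f hf
  exact hVW (Set.mk_mem_prod (hKV hf) hy)
end

section
/- Let A be a locally compact topological algebra and L ⊆ A. Then L is clopen and σ_L is determined by some compact subset of C(A,A) if and only if σ_L is clopen in A × A. -/
universe u v w

/-- For a locally compact (Hausdorff) algebra `A` and `L ⊆ A`: `L` is clopen
and `σ_L` is determined by some compact subset of `C(A,A)` if and only if
`σ_L` is clopen in `A × A`. -/
theorem stmt17 {Ω : ℕ → Type u} {A : Type v} [TopologicalSpace A]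
    [T2Space A] [LocallyCompactSpace A]
    (ops : ∀ n, Ω n → (Fin n → A) → A)
    (hc : ∀ (n : ℕ) (w : Ω n), Continuous (ops n w))
    (L : Set A) :
    (IsClopen L ∧ ∃ K : Set C(A, A), IsCompact K ∧
        ∀ a a' : A, synCong ops L a a' ↔ ∀ f ∈ K, (f a ∈ L ↔ f a' ∈ L)) ↔
      IsClopen {p : A × A | synCong ops L p.1 p.2} := by
  constructor
  · -- forward: clopen L + compact determination ⟹ σ clopen
    rintro ⟨hL, K, hK, hiff⟩
    have heq : {p : A × A | synCong ops L p.1 p.2}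
        = {p : A × A | ∀ f ∈ K, (f p.1 ∈ L ↔ f p.2 ∈ L)} := by
      ext p; exact hiff p.1 p.2
    rw [heq]
    constructor
    · -- closed
      have hrw : {p : A × A | ∀ f ∈ K, (f p.1 ∈ L ↔ f p.2 ∈ L)}
          = ⋂ f ∈ K, {p : A × A | (f p.1 ∈ L ↔ f p.2 ∈ L)} := by
        ext p; simp
      rw [hrw]
      refine isClosed_biInter fun f _ => ?_
      have h1 : Continuous fun p : A × A => f p.1 := f.continuous.comp continuous_fst
      have h2 : Continuous fun p : A × A => f p.2 := f.continuous.comp continuous_snd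
      have hdec : {p : A × A | (f p.1 ∈ L ↔ f p.2 ∈ L)}
          = ((fun p : A × A => f p.1) ⁻¹' L ∩ (fun p : A × A => f p.2) ⁻¹' L)
            ∪ ((fun p : A × A => f p.1) ⁻¹' Lᶜ ∩ (fun p : A × A => f p.2) ⁻¹' Lᶜ) := by
        ext p
        by_cases ha : f p.1 ∈ L <;> by_cases hb : f p.2 ∈ L <;> simp [ha, hb]
      rw [hdec]
      exact (((hL.preimage h1).inter (hL.preimage h2)).union
        ((hL.compl.preimage h1).inter (hL.compl.preimage h2))).isClosed
    · -- open, via the tube lemma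
      have e1 : Continuous fun q : C(A, A) × (A × A) => q.1 q.2.1 :=
        ContinuousEval.continuous_eval.comp
          (continuous_fst.prodMk (continuous_fst.comp continuous_snd))
      have e2 : Continuous fun q : C(A, A) × (A × A) => q.1 q.2.2 :=
        ContinuousEval.continuous_eval.comp
          (continuous_fst.prodMk (continuous_snd.comp continuous_snd))
      have hSdec : {q : C(A, A) × (A × A) | (q.1 q.2.1 ∈ L ↔ q.1 q.2.2 ∈ L)}
          = ((fun q : C(A, A) × (A × A) => q.1 q.2.1) ⁻¹' L
              ∩ (fun q : C(A, A) × (A × A) => q.1 q.2.2) ⁻¹' L)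
            ∪ ((fun q : C(A, A) × (A × A) => q.1 q.2.1) ⁻¹' Lᶜ
              ∩ (fun q : C(A, A) × (A × A) => q.1 q.2.2) ⁻¹' Lᶜ) := by
        ext q
        by_cases ha : q.1 q.2.1 ∈ L <;> by_cases hb : q.1 q.2.2 ∈ L <;> simp [ha, hb]
      have hSopen : IsOpen {q : C(A, A) × (A × A) | (q.1 q.2.1 ∈ L ↔ q.1 q.2.2 ∈ L)} := by
        rw [hSdec]
        exact (((hL.preimage e1).inter (hL.preimage e2)).union
          ((hL.compl.preimage e1).inter (hL.compl.preimage e2))).isOpen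
      rw [isOpen_iff_forall_mem_open]
      intro p hp
      have hsub : K ×ˢ ({p} : Set (A × A))
          ⊆ {q : C(A, A) × (A × A) | (q.1 q.2.1 ∈ L ↔ q.1 q.2.2 ∈ L)} := by
        rintro ⟨f, p'⟩ ⟨hf, hp'⟩
        simp only [Set.mem_singleton_iff] at hp'
        subst hp'
        exact hp f hf
      obtain ⟨u, w, hu, hw, hKu, hpw, huw⟩ :=
        generalized_tube_lemma hK isCompact_singleton hSopen hsub
      have hws : w ⊆ {p : A × A | ∀ f ∈ K, (f p.1 ∈ L ↔ f p.2 ∈ L)} :=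
        fun x hx f hf => huw (show (f, x) ∈ u ×ˢ w from ⟨hKu hf, hx⟩)
      exact ⟨w, hws, hw, hpw rfl⟩
  · -- backward: σ clopen ⟹ L clopen + compact determination
    intro hσ
    have hequiv := synCong_equivalence ops L
    have hsat : ∀ a a', synCong ops L a a' → (a ∈ L ↔ a' ∈ L) :=
      fun a a' h => h id IsTranslation.id_map
    have hclass : ∀ a : A, IsClopen {x | synCong ops L a x} := by
      intro a
      have : {x | synCong ops L a x}
          = (fun x => ((a, x) : A × A)) ⁻¹' {p : A × A | synCong ops L p.1 p.2} := rfl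
      rw [this]
      exact hσ.preimage (continuous_const.prodMk continuous_id)
    have hLclopen : IsClopen L := by
      constructor
      · rw [← isOpen_compl_iff, isOpen_iff_forall_mem_open]
        intro a ha
        exact ⟨{x | synCong ops L a x},
          fun x hx hxL => ha ((hsat a x hx).mpr hxL), (hclass a).2, hequiv.refl a⟩
      · rw [isOpen_iff_forall_mem_open]
        intro a ha
        exact ⟨{x | synCong ops L a x},
          fun x hx => (hsat a x hx).mp ha, (hclass a).2, hequiv.refl a⟩
    refine ⟨hLclopen, ?_⟩
    by_cases hpq : (∃ p, p ∈ L) ∧ (∃ q, q ∉ L)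
    · obtain ⟨⟨p, hp⟩, ⟨q, hq⟩⟩ := hpq
      classical
      -- The space of class-constant boolean functions
      set X : Set (A → Bool) :=
        {g : A → Bool | ∀ x y, synCong ops L x y → g x = g y} with hXdef
      have hXclosed : IsClosed X := by
        have : X = ⋂ x : A, ⋂ y : A, {g : A → Bool | synCong ops L x y → g x = g y} := by
          ext g; simp [hXdef]
        rw [this]
        refine isClosed_iInter fun x => isClosed_iInter fun y => ?_
        by_cases h : synCong ops L x y
        · simp only [h, forall_true_left]
          exact isClosed_eq (continuous_apply x) (continuous_apply y)
        · have : {g : A → Bool | synCong ops L x y → g x = g y} = Set.univ := by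
            ext g; simp [h]
          rw [this]; exact isClosed_univ
      have hXcompact : CompactSpace X :=
        isCompact_iff_compactSpace.mp hXclosed.isCompact
      -- The map into C(A, A)
      have hcontfun : ∀ g : X, Continuous fun x : A => if (g : A → Bool) x then p else q := by
        intro g
        refine IsLocallyConstant.continuous ?_
        rw [IsLocallyConstant.iff_exists_open]
        intro x
        refine ⟨{y | synCong ops L x y}, (hclass x).2, hequiv.refl x, fun y hy => ?_⟩
        have : (g : A → Bool) y = (g : A → Bool) x := (g.2 x y hy).symm
        rw [this]
      set Φ : X → C(A, A) := fun g => ⟨fun x => if (g : A → Bool) x then p else q, hcontfun g⟩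
        with hΦdef
      have hΦcont : Continuous Φ := by
        refine ContinuousMap.continuous_of_continuous_uncurry Φ ?_
        refine IsLocallyConstant.continuous ?_
        rw [IsLocallyConstant.iff_exists_open]
        rintro ⟨g₀, x₀⟩
        refine ⟨{g : X | (g : A → Bool) x₀ = (g₀ : A → Bool) x₀} ×ˢ {x | synCong ops L x₀ x},
          ?_, ⟨rfl, hequiv.refl x₀⟩, ?_⟩
        · refine IsOpen.prod ?_ (hclass x₀).2
          have : Continuous fun g : X => (g : A → Bool) x₀ :=
            (continuous_apply x₀).comp continuous_subtype_val
          exact (isOpen_discrete {(g₀ : A → Bool) x₀}).preimage this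
        · rintro ⟨g, x⟩ ⟨hg, hx⟩
          simp only [Function.uncurry, hΦdef, ContinuousMap.coe_mk]
          have h1 : (g : A → Bool) x = (g : A → Bool) x₀ := (g.2 x₀ x hx).symm
          rw [h1, hg]
      refine ⟨Set.range Φ, isCompact_range hΦcont, fun a a' => ?_⟩
      constructor
      · rintro h f ⟨g, rfl⟩
        have : (g : A → Bool) a = (g : A → Bool) a' := g.2 a a' h
        simp only [hΦdef, ContinuousMap.coe_mk, this]
      · intro h
        by_contra hn
        set g : A → Bool := fun x => if synCong ops L a x then true else false with hgdef
        have hgX : g ∈ X := by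
          intro x y hxy
          by_cases hax : synCong ops L a x
          · have hay : synCong ops L a y := hequiv.trans hax hxy
            simp [hgdef, hax, hay]
          · have hay : ¬ synCong ops L a y := fun hay =>
              hax (hequiv.trans hay (hequiv.symm hxy))
            simp [hgdef, hax, hay]
        have hmem : Φ ⟨g, hgX⟩ ∈ Set.range Φ := ⟨⟨g, hgX⟩, rfl⟩
        have hiff2 := h _ hmem
        have hfa : Φ ⟨g, hgX⟩ a = p := by
          simp [hΦdef, hgdef, hequiv.refl a]
        have hfa' : Φ ⟨g, hgX⟩ a' = q := by
          simp [hΦdef, hgdef, hn]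
        rw [hfa, hfa'] at hiff2
        exact hq (hiff2.mp hp)
    · -- degenerate case: L = ∅ or L = univ
      rw [not_and_or] at hpq
      have htriv : ∀ x y : A, x ∈ L ↔ y ∈ L := by
        rcases hpq with h | h
        · push_neg at h
          intro x y; simp [h x, h y]
        · push_neg at h
          intro x y; simp [h x, h y]
      refine ⟨∅, isCompact_empty, fun a a' => ?_⟩
      simp only [Set.mem_empty_iff_false, false_implies, implies_true, iff_true]
      exact fun f _ => htriv (f a) (f a')
end

section
/- In the additive monoid ℕ (with discrete topology), if L ⊆ ℕ is infinite and contains no infinite arithmetic progression, then the syntactic congruence σ_L is the equality relation; consequently σ_L does not have finite index. -/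
/-- In the additive monoid `ℕ`, if `L` is infinite and contains no infinite
arithmetic progression, then the syntactic congruence `σ_L` (for a commutative
monoid, `(m,n) ∈ σ_L ↔ ∀ x, m + x ∈ L ↔ n + x ∈ L`) is the equality relation;
consequently `σ_L` does not have finite index. -/
theorem stmt19 (L : Set ℕ) (hinf : L.Infinite)
    (hAP : ∀ a d : ℕ, 1 ≤ d → ¬ ∀ k : ℕ, a + k * d ∈ L) :
    (∀ m n : ℕ, (∀ x : ℕ, m + x ∈ L ↔ n + x ∈ L) ↔ m = n) ∧
    ¬ ∃ S : Finset ℕ, ∀ n : ℕ, ∃ m ∈ S, ∀ x : ℕ, m + x ∈ L ↔ n + x ∈ L := by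
  have key : ∀ m n : ℕ, m < n → ¬ (∀ x : ℕ, m + x ∈ L ↔ n + x ∈ L) := by
    intro m n hmn h
    obtain ⟨a, haL, ham⟩ := hinf.exists_gt m
    refine hAP a (n - m) (by omega) ?_
    intro k
    induction k with
    | zero => simpa using haL
    | succ k ih =>
      have := (h (a - m + k * (n - m))).mp
        (by rw [show m + (a - m + k * (n - m)) = a + k * (n - m) by omega]; exact ih)
      rwa [show n + (a - m + k * (n - m)) = a + (k + 1) * (n - m) by
        have : k * (n - m) + (n - m) = (k + 1) * (n - m) := by ring
        omega] at this
  have eqrel : ∀ m n : ℕ, (∀ x : ℕ, m + x ∈ L ↔ n + x ∈ L) ↔ m = n := by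
    intro m n
    constructor
    · intro h
      by_contra hne
      rcases Nat.lt_or_ge m n with hlt | hge
      · exact key m n hlt h
      · exact key n m (by omega) (fun x => (h x).symm)
    · rintro rfl; exact fun _ => Iff.rfl
  refine ⟨eqrel, ?_⟩
  rintro ⟨S, hS⟩
  obtain ⟨m, hm, hx⟩ := hS (S.sup id + 1)
  have h1 : m = S.sup id + 1 := (eqrel _ _).mp hx
  have h2 : m ≤ S.sup id := Finset.le_sup (f := id) hm
  omega
end
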